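/- Let $m \ge 1$, let $\tilde F, \tilde V$ be $m \times m$ real symmetric positive definite matrices that commute ($\tilde F \tilde V = \tilde V \tilde F$), let $\tilde D, \Delta\tilde V$ be $m \times m$ real symmetric matrices, and let $\mu > 0$. If the scaled Newton equation $\tilde F \circ \tilde V + \tilde D \circ \tilde V + \tilde F \circ \Delta \tilde V = \mu I$ holds, then $\mathrm{Tr}\left(\tilde D \tilde V + \tilde F \Delta\tilde V - \mu \tilde F^{-1} \tilde D - \mu \tilde V^{-1} \Delta\tilde V\right) = -\left\| \mu \tilde V^{-1/2} \tilde F^{-1/2} - \tilde F^{1/2} \tilde V^{1/2} \right\|_F^2 \le 0$, and this quantity equals zero if and only if $\tilde F \tilde V = \mu I$. -/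

import Mathlib

open Matrix

/-- The matrix square root of a positive semidefinite matrix, as defined in the older Mathlib
(`Matrix.PosSemidef.sqrt`, removed since). -/
noncomputable def Matrix.PosSemidef.sqrt {n : Type*} [Fintype n] [DecidableEq n]
    {A : Matrix n n ℝ} (hA : A.PosSemidef) : Matrix n n ℝ :=
  hA.1.eigenvectorUnitary.1 * diagonal ((√·) ∘ hA.1.eigenvalues) *
  (star hA.1.eigenvectorUnitary : Matrix n n ℝ)

namespace Matrix

namespace PosSemidef

variable {n : Type*} [Fintype n] [DecidableEq n] {A : Matrix n n ℝ} (hA : A.PosSemidef)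

theorem sqrt_eq_cfc : hA.sqrt = cfc Real.sqrt A := by
  rw [hA.1.cfc_eq, IsHermitian.cfc, Unitary.conjStarAlgAut_apply]
  rfl

theorem sqrt_mul_self : hA.sqrt * hA.sqrt = A := by
  rw [sqrt_eq_cfc, ← cfc_mul Real.sqrt Real.sqrt A]
  refine (cfc_congr fun x hx => Real.mul_self_sqrt ?_).trans (cfc_id ℝ A hA.isHermitian)
  exact (posSemidef_iff_isHermitian_and_spectrum_nonneg.mp hA).2 hx

theorem transpose_sqrt : hA.sqrtᵀ = hA.sqrt := by
  rw [← conjTranspose_eq_transpose_of_trivial, sqrt_eq_cfc]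
  exact (cfc_predicate Real.sqrt A : IsSelfAdjoint _)

theorem commute_sqrt {B : Matrix n n ℝ} (h : Commute A B) : Commute hA.sqrt B := by
  rw [sqrt_eq_cfc]
  exact h.cfc_real _

end PosSemidef

variable {n : Type*} [Fintype n]

theorem trace_mul_half_smul_add_of_commute {K : Type*} [Field K] [NeZero (2 : K)]
    {P Q : Matrix n n K} (h : Commute P Q) (X : Matrix n n K) :
    (P * ((1 / 2 : K) • (X * Q + Q * X))).trace = (P * Q * X).trace := by
  have hcyc : (P * (X * Q)).trace = (P * Q * X).trace := by
    rw [← Matrix.mul_assoc, trace_mul_comm, ← Matrix.mul_assoc, h.eq]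
  rw [Matrix.mul_smul, Matrix.mul_add, trace_smul, trace_add, hcyc, ← Matrix.mul_assoc,
    smul_eq_mul, one_div, ← two_mul, inv_mul_cancel_left₀ two_ne_zero]

variable [DecidableEq n]

theorem commute_nonsing_inv_right {R : Type*} [CommRing R] {A B : Matrix n n R}
    (h : Commute A B) : Commute A B⁻¹ := by
  simpa only [Matrix.zpow_neg_one] using Matrix.Commute.zpow_right h (-1)

theorem smul_nonsing_inv_sub_eq_zero_iff {R : Type*} [CommRing R] {P : Matrix n n R}
    (hP : IsUnit P.det) (μ : R) : μ • P⁻¹ - P = 0 ↔ P * P = μ • 1 := by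
  rw [sub_eq_zero]
  constructor
  · intro h
    nth_rewrite 2 [← h]
    rw [mul_smul_comm, mul_nonsing_inv _ hP]
  · intro h
    calc μ • P⁻¹ = (μ • 1) * P⁻¹ := by rw [smul_mul_assoc, one_mul]
      _ = P := by rw [← h, Matrix.mul_assoc, mul_nonsing_inv _ hP, Matrix.mul_one]

theorem trace_transpose_mul_self_smul_nonsing_inv_sub {R : Type*} [CommRing R]
    {P : Matrix n n R} (hPt : Pᵀ = P) (hP : IsUnit P.det) (μ : R) :
    ((μ • P⁻¹ - P)ᵀ * (μ • P⁻¹ - P)).trace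
      = μ ^ 2 * (P * P)⁻¹.trace - 2 * μ * Fintype.card n + (P * P).trace := by
  rw [transpose_sub, transpose_smul, transpose_nonsing_inv, hPt]
  simp only [Matrix.sub_mul, Matrix.mul_sub, smul_mul_assoc, mul_smul_comm,
    nonsing_inv_mul _ hP, mul_nonsing_inv _ hP, ← Matrix.mul_inv_rev, trace_sub, trace_smul,
    trace_one, smul_eq_mul]
  ring

variable {K : Type*} [Field K] [NeZero (2 : K)] {F V D Δ : Matrix n n K} {μ : K}

theorem trace_mul_newton_eq {P : Matrix n n K} (hPF : Commute P F) (hPV : Commute P V)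
    (hNewton : (1/2 : K) • (F * V + V * F) + (1/2 : K) • (D * V + V * D)
        + (1/2 : K) • (F * Δ + Δ * F) = μ • 1) :
    (P * V * F).trace + (P * V * D).trace + (P * F * Δ).trace = μ * P.trace := by
  have h := congrArg (fun M => (P * M).trace) hNewton
  rw [add_comm (F * Δ)] at h
  rwa [Matrix.mul_add, Matrix.mul_add, trace_add, trace_add,
    trace_mul_half_smul_add_of_commute hPV, trace_mul_half_smul_add_of_commute hPV,
    trace_mul_half_smul_add_of_commute hPF,
    Matrix.mul_smul, Matrix.mul_one, trace_smul, smul_eq_mul] at h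

theorem trace_newton_direction_eq (hF : IsUnit F.det) (hV : IsUnit V.det) (hFV : Commute F V)
    (hNewton : (1/2 : K) • (F * V + V * F) + (1/2 : K) • (D * V + V * D)
        + (1/2 : K) • (F * Δ + Δ * F) = μ • 1) :
    (D * V + F * Δ - μ • (F⁻¹ * D) - μ • (V⁻¹ * Δ)).trace
      = 2 * μ * Fintype.card n - (F * V).trace - μ ^ 2 * (F * V)⁻¹.trace := by
  have h₁ := trace_mul_newton_eq (Commute.one_left F) (Commute.one_left V) hNewton
  have hF_FV : Commute F (F * V) := (Commute.refl F).mul_right hFV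
  have hV_FV : Commute V (F * V) := hFV.symm.mul_right (Commute.refl V)
  have h₂ := trace_mul_newton_eq (commute_nonsing_inv_right hF_FV).symm
    (commute_nonsing_inv_right hV_FV).symm hNewton
  have hinvV : (F * V)⁻¹ * V = F⁻¹ := by
    rw [hFV.eq, Matrix.mul_inv_rev, Matrix.mul_assoc, nonsing_inv_mul _ hV, Matrix.mul_one]
  have hinvF : (F * V)⁻¹ * F = V⁻¹ := by
    rw [Matrix.mul_inv_rev, Matrix.mul_assoc, nonsing_inv_mul _ hF, Matrix.mul_one]
  rw [hinvV, hinvF, nonsing_inv_mul _ hF, trace_one] at h₂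
  simp only [Matrix.one_mul, trace_one, trace_mul_comm V] at h₁
  simp only [trace_sub, trace_add, trace_smul, smul_eq_mul]
  linear_combination h₁ - μ * h₂

end Matrix

theorem stmt_8_general {m : ℕ} (tF tV tD ΔtV : Matrix (Fin m) (Fin m) ℝ)
    (htF : tF.PosDef) (htV : tV.PosDef) (hcomm : tF * tV = tV * tF)
    (μ : ℝ)
    (hNewton : (1/2 : ℝ) • (tF * tV + tV * tF) + (1/2 : ℝ) • (tD * tV + tV * tD)
        + (1/2 : ℝ) • (tF * ΔtV + ΔtV * tF) = μ • (1 : Matrix (Fin m) (Fin m) ℝ)) :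
    (tD * tV + tF * ΔtV - μ • (tF⁻¹ * tD) - μ • (tV⁻¹ * ΔtV)).trace =
      -(((μ • ((htV.posSemidef.sqrt)⁻¹ * (htF.posSemidef.sqrt)⁻¹)
            - htF.posSemidef.sqrt * htV.posSemidef.sqrt)ᵀ *
          (μ • ((htV.posSemidef.sqrt)⁻¹ * (htF.posSemidef.sqrt)⁻¹)
            - htF.posSemidef.sqrt * htV.posSemidef.sqrt)).trace) ∧
    (tD * tV + tF * ΔtV - μ • (tF⁻¹ * tD) - μ • (tV⁻¹ * ΔtV)).trace ≤ 0 ∧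
    ((tD * tV + tF * ΔtV - μ • (tF⁻¹ * tD) - μ • (tV⁻¹ * ΔtV)).trace = 0 ↔
      tF * tV = μ • (1 : Matrix (Fin m) (Fin m) ℝ)) := by
  set sF := htF.posSemidef.sqrt
  set sV := htV.posSemidef.sqrt
  have hsVF : Commute sV sF :=
    htV.posSemidef.commute_sqrt (htF.posSemidef.commute_sqrt hcomm).symm
  rw [← Matrix.mul_inv_rev]
  set P := sF * sV with hP
  have hPP : P * P = tF * tV := by
    rw [hP, hsVF.mul_mul_mul_comm, htF.posSemidef.sqrt_mul_self, htV.posSemidef.sqrt_mul_self]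
  have hPt : Pᵀ = P := by
    rw [hP, transpose_mul, htF.posSemidef.transpose_sqrt, htV.posSemidef.transpose_sqrt, hsVF.eq]
  have hdetP : IsUnit P.det := by
    refine isUnit_of_mul_isUnit_left (y := P.det) ?_
    rw [← det_mul, hPP, det_mul]
    exact (mul_pos htF.det_pos htV.det_pos).ne'.isUnit
  have key : (tD * tV + tF * ΔtV - μ • (tF⁻¹ * tD) - μ • (tV⁻¹ * ΔtV)).trace
      = -((μ • P⁻¹ - P)ᵀ * (μ • P⁻¹ - P)).trace := by
    rw [trace_transpose_mul_self_smul_nonsing_inv_sub hPt hdetP, hPP,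
      trace_newton_direction_eq htF.det_pos.ne'.isUnit htV.det_pos.ne'.isUnit hcomm hNewton]
    ring
  rw [key, ← conjTranspose_eq_transpose_of_trivial]
  refine ⟨rfl, neg_nonpos.mpr (posSemidef_conjTranspose_mul_self _).trace_nonneg, ?_⟩
  rw [neg_eq_zero, trace_conjTranspose_mul_self_eq_zero_iff,
    smul_nonsing_inv_sub_eq_zero_iff hdetP, hPP]

/-- Core of Lemma 4(1): under the scaled Newton equation with commuting `F̃, Ṽ ≻ 0`,
the directional-derivative trace expression equals minus the squared Frobenius norm of
`μ Ṽ^{-1/2} F̃^{-1/2} - F̃^{1/2} Ṽ^{1/2}`, hence is `≤ 0`, vanishing iff `F̃Ṽ = μI`. -/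
theorem stmt_8 {m : ℕ} (hm : 1 ≤ m) (tF tV tD ΔtV : Matrix (Fin m) (Fin m) ℝ)
    (htF : tF.PosDef) (htV : tV.PosDef) (hcomm : tF * tV = tV * tF)
    (htD : tD.IsHermitian) (hΔ : ΔtV.IsHermitian) (μ : ℝ) (hμ : 0 < μ)
    (hNewton : (1/2 : ℝ) • (tF * tV + tV * tF) + (1/2 : ℝ) • (tD * tV + tV * tD)
        + (1/2 : ℝ) • (tF * ΔtV + ΔtV * tF) = μ • (1 : Matrix (Fin m) (Fin m) ℝ)) :
    (tD * tV + tF * ΔtV - μ • (tF⁻¹ * tD) - μ • (tV⁻¹ * ΔtV)).trace =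
      -(((μ • ((htV.posSemidef.sqrt)⁻¹ * (htF.posSemidef.sqrt)⁻¹)
            - htF.posSemidef.sqrt * htV.posSemidef.sqrt)ᵀ *
          (μ • ((htV.posSemidef.sqrt)⁻¹ * (htF.posSemidef.sqrt)⁻¹)
            - htF.posSemidef.sqrt * htV.posSemidef.sqrt)).trace) ∧
    (tD * tV + tF * ΔtV - μ • (tF⁻¹ * tD) - μ • (tV⁻¹ * ΔtV)).trace ≤ 0 ∧
    ((tD * tV + tF * ΔtV - μ • (tF⁻¹ * tD) - μ • (tV⁻¹ * ΔtV)).trace = 0 ↔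
      tF * tV = μ • (1 : Matrix (Fin m) (Fin m) ℝ)) :=
  stmt_8_general tF tV tD ΔtV htF htV hcomm μ hNewton
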